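/- Let m > n > 1 be integers and let f, g be non-singular affine maps of ℝ. For k ∈ ℕ let A_k = {x ∈ ℝ : f^{-1}(D_{m^k}(f(x))) ⊄ g^{-1}(D_{n^k}(g(x)))}. Suppose μ is a Borel probability measure on [0,1] such that the pushforward gμ is pointwise generic under T_n for a continuous (non-atomic) measure ρ. Then for μ-almost every x, the set {k ∈ ℕ : x ∈ A_k} has natural density zero. -/

import Mathlib

open MeasureTheory Filter Set Topology
open scoped ENNReal

/-- `T_n x = n x mod 1` as a self-map of `[0,1) ⊆ ℝ`. -/
noncomputable def Tmap (n : ℕ) (x : ℝ) : ℝ := Int.fract (n * x)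

/-- `μ` is pointwise generic for `ρ` under `T`. -/
def PointwiseGeneric (μ : Measure ℝ) (T : ℝ → ℝ) (ρ : Measure ℝ) : Prop :=
  ∀ᵐ x ∂μ, ∀ f : BoundedContinuousFunction ℝ ℝ,
    Tendsto (fun N : ℕ => (1 / N : ℝ) * ∑ k ∈ Finset.range N, f (T^[k] x)) atTop
      (𝓝 (∫ y, f y ∂ρ))

open Classical in
/-- A set of natural numbers has natural density zero. -/
def HasDensityZero (S : Set ℕ) : Prop :=
  Tendsto (fun N : ℕ => (((Finset.Icc 1 N).filter (fun k => k ∈ S)).card : ℝ) / N)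
    atTop (𝓝 0)

/-- The cell `D_q(x) = [⌊qx⌋/q, (⌊qx⌋+1)/q)` of the partition `D_q` of `ℝ` containing `x`. -/
noncomputable def Dcell (q : ℕ) (x : ℝ) : Set ℝ :=
  Set.Ico ((⌊(q : ℝ) * x⌋ : ℝ) / q) (((⌊(q : ℝ) * x⌋ : ℝ) + 1) / q)

open Metric
open scoped BoundedContinuousFunction

/-!
If `x ∈ A_k`, some `y` has `f y` within `1/m^k` of `f x` but `g y` outside the `n`-adic cell
of `g x`; as `g ∘ f⁻¹` is affine, `n^k g(x)` is then within `(|c|/|a|)(n/m)^k → 0` of an integer.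
So for large `k`, `x ∈ A_k` forces `T_n^k (g x)` into a small neighbourhood of `{0, 1}`. Since
`ρ` has no atoms this neighbourhood has small `ρ`-measure, and genericity of `g x` bounds the
frequency of visits to it by a bump function whose `ρ`-integral is small.
-/

lemma mem_Dcell_iff {q : ℕ} (hq : 0 < q) {u v : ℝ} :
    u ∈ Dcell q v ↔ (⌊(q : ℝ) * v⌋ : ℝ) ≤ q * u ∧ q * u < ⌊(q : ℝ) * v⌋ + 1 := by
  have hq' : (0 : ℝ) < q := Nat.cast_pos.mpr hq
  rw [Dcell, mem_Ico, div_le_iff₀ hq', lt_div_iff₀ hq', mul_comm u]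

lemma dist_lt_of_mem_Dcell {q : ℕ} (hq : 0 < q) {u v : ℝ} (h : u ∈ Dcell q v) :
    dist u v < 1 / q := by
  have hq' : (0 : ℝ) < q := Nat.cast_pos.mpr hq
  rw [mem_Dcell_iff hq] at h
  have := Int.floor_le ((q : ℝ) * v)
  have := Int.lt_floor_add_one ((q : ℝ) * v)
  rw [Real.dist_eq, lt_div_iff₀ hq', ← abs_of_pos hq', ← abs_mul, sub_mul, abs_sub_lt_iff]
  constructor <;> linarith

lemma exists_dist_fract_le_of_notMem_Dcell {q : ℕ} (hq : 0 < q) {u v : ℝ} (h : u ∉ Dcell q v) :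
    ∃ t ∈ ({0, 1} : Set ℝ), dist (Int.fract (q * v)) t ≤ q * dist u v := by
  have hq' : (0 : ℝ) < q := Nat.cast_pos.mpr hq
  have hfract := Int.self_sub_floor ((q : ℝ) * v)
  have hvu : (q : ℝ) * (v - u) ≤ q * dist u v :=
    mul_le_mul_of_nonneg_left (by rw [dist_comm]; exact le_abs_self _) hq'.le
  have huv : (q : ℝ) * (u - v) ≤ q * dist u v :=
    mul_le_mul_of_nonneg_left (le_abs_self _) hq'.le
  rw [mem_Dcell_iff hq, not_and_or, not_le, not_lt] at h
  rcases h with h | h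
  · refine ⟨0, by simp, ?_⟩
    rw [Real.dist_eq, sub_zero, abs_of_nonneg (Int.fract_nonneg _)]
    linarith
  · refine ⟨1, by simp, ?_⟩
    rw [Real.dist_eq, abs_of_nonpos (by linarith [Int.fract_lt_one ((q : ℝ) * v)])]
    linarith

lemma exists_dist_fract_le_of_not_preimage_Dcell_subset {M q : ℕ} (hM : 0 < M) (hq : 0 < q) {a : ℝ}
    (ha : a ≠ 0) (b c d x : ℝ)
    (h : ¬ (fun y => a * y + b) ⁻¹' Dcell M (a * x + b) ⊆
      (fun y => c * y + d) ⁻¹' Dcell q (c * x + d)) :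
    ∃ t ∈ ({0, 1} : Set ℝ), dist (Int.fract (q * (c * x + d))) t ≤ |c| / |a| * (q / M) := by
  obtain ⟨y, hyf, hyg⟩ := not_subset.1 h
  obtain ⟨t, ht, hdist⟩ := exists_dist_fract_le_of_notMem_Dcell hq hyg
  refine ⟨t, ht, hdist.trans ?_⟩
  have hslope : dist (c * y + d) (c * x + d) = |c| / |a| * dist (a * y + b) (a * x + b) := by
    rw [Real.dist_eq, Real.dist_eq, show c * y + d - (c * x + d) = c * (y - x) by ring,
      show a * y + b - (a * x + b) = a * (y - x) by ring, abs_mul, abs_mul]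
    field_simp
  calc (q : ℝ) * dist (c * y + d) (c * x + d)
      = q * (|c| / |a|) * dist (a * y + b) (a * x + b) := by rw [hslope]; ring
    _ ≤ q * (|c| / |a|) * (1 / M) := by gcongr; exact (dist_lt_of_mem_Dcell hM hyf).le
    _ = |c| / |a| * (q / M) := by ring

lemma Tmap_iterate (n : ℕ) {k : ℕ} (hk : k ≠ 0) (y : ℝ) :
    (Tmap n)^[k] y = Int.fract ((n : ℝ) ^ k * y) := by
  induction k with
  | zero => exact absurd rfl hk
  | succ k ih =>
    rcases eq_or_ne k 0 with rfl | hk0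
    · simp [Tmap]
    rw [Function.iterate_succ_apply', ih hk0, Tmap, ← Int.self_sub_floor ((n : ℝ) ^ k * y),
      show (n : ℝ) * ((n : ℝ) ^ k * y - ⌊(n : ℝ) ^ k * y⌋)
        = (n : ℝ) ^ (k + 1) * y - ((n * ⌊(n : ℝ) ^ k * y⌋ : ℤ) : ℝ) by push_cast; ring,
      Int.fract_sub_intCast]

open Classical in
lemma card_filter_Icc_le_add_sum {S : Set ℕ} {w : ℕ → ℝ} (hw : ∀ k, 0 ≤ w k) {K : ℕ}
    (hK : ∀ k, K ≤ k → k ∈ S → 1 ≤ w k) (N : ℕ) :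
    (((Finset.Icc 1 N).filter (· ∈ S)).card : ℝ) ≤ K + 1 + ∑ k ∈ Finset.range N, w k := by
  set late := (Finset.range N).filter fun k => K ≤ k ∧ k ∈ S
  have hsub : (Finset.Icc 1 N).filter (· ∈ S) ⊆ Finset.range K ∪ insert N late := by
    intro k hk
    simp only [Finset.mem_filter, Finset.mem_Icc] at hk
    simp only [late, Finset.mem_union, Finset.mem_insert, Finset.mem_filter, Finset.mem_range]
    by_cases hkK : k < K
    · exact Or.inl hkK
    · rcases hk.1.2.lt_or_eq with hkN | rfl
      · exact Or.inr (Or.inr ⟨hkN, by omega, hk.2⟩)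
      · exact Or.inr (Or.inl rfl)
  have hcard : ((Finset.Icc 1 N).filter (· ∈ S)).card ≤ K + 1 + late.card :=
    calc _ ≤ (Finset.range K ∪ insert N late).card := Finset.card_le_card hsub
      _ ≤ K + (late.card + 1) :=
        (Finset.card_union_le _ _).trans (by simpa using Finset.card_insert_le N late)
      _ = K + 1 + late.card := by ring
  have hlate : (late.card : ℝ) ≤ ∑ k ∈ Finset.range N, w k :=
    calc (late.card : ℝ) = ∑ _k ∈ late, (1 : ℝ) := by simp
      _ ≤ ∑ k ∈ late, w k := Finset.sum_le_sum fun k hk => by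
        simp only [late, Finset.mem_filter] at hk
        exact hK k hk.2.1 hk.2.2
      _ ≤ ∑ k ∈ Finset.range N, w k :=
        Finset.sum_le_sum_of_subset_of_nonneg (Finset.filter_subset _ _) fun k _ _ => hw k
  have hcard' : (((Finset.Icc 1 N).filter (· ∈ S)).card : ℝ) ≤ K + 1 + late.card := by
    exact_mod_cast hcard
  linarith

lemma hasDensityZero_of_forall_cesaro_lt {S : Set ℕ}
    (h : ∀ ε > 0, ∃ w : ℕ → ℝ, (∀ k, 0 ≤ w k) ∧ (∀ᶠ k in atTop, k ∈ S → 1 ≤ w k) ∧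
      ∃ L < ε, Tendsto (fun N : ℕ => (1 / N : ℝ) * ∑ k ∈ Finset.range N, w k) atTop (𝓝 L)) :
    HasDensityZero S := by
  refine tendsto_order.2 ⟨fun a ha => Eventually.of_forall fun N => ha.trans_le (by positivity),
    fun ε hε => ?_⟩
  obtain ⟨w, hw, hS, L, hL, hlim⟩ := h ε hε
  obtain ⟨K, hK⟩ := eventually_atTop.1 hS
  have hbound := (tendsto_const_div_atTop_nhds_zero_nat ((K : ℝ) + 1)).add hlim
  rw [zero_add] at hbound
  filter_upwards [hbound.eventually (gt_mem_nhds hL)] with N hN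
  calc _ ≤ ((K : ℝ) + 1 + ∑ k ∈ Finset.range N, w k) / N :=
        div_le_div_of_nonneg_right (card_filter_Icc_le_add_sum hw hK N) (Nat.cast_nonneg N)
    _ = ((K : ℝ) + 1) / N + 1 / N * ∑ k ∈ Finset.range N, w k := by ring
    _ < ε := hN

lemma hasDensityZero_of_tendsto_cesaro_of_eventually_mem_thickening {X : Type*}
    [PseudoMetricSpace X] [MeasurableSpace X] [OpensMeasurableSpace X]
    {ρ : Measure X} [IsFiniteMeasure ρ] {z : ℕ → X}
    (hz : ∀ φ : X →ᵇ ℝ,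
      Tendsto (fun N : ℕ => (1 / N : ℝ) * ∑ k ∈ Finset.range N, φ (z k)) atTop (𝓝 (∫ y, φ y ∂ρ)))
    {F : Set X} (hF : IsClosed F) (hρF : ρ F = 0) {S : Set ℕ}
    (hS : ∀ δ > 0, ∀ᶠ k in atTop, k ∈ S → z k ∈ thickening δ F) :
    HasDensityZero S := by
  refine hasDensityZero_of_forall_cesaro_lt fun ε hε => ?_
  obtain ⟨δ, hρδ, hδ⟩ : ∃ δ, ρ (thickening δ F) < ENNReal.ofReal ε ∧ 0 < δ := by
    have hlim := tendsto_measure_thickening_of_isClosed ⟨1, one_pos, measure_ne_top ρ _⟩ hF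
    rw [hρF] at hlim
    exact ((hlim.eventually (gt_mem_nhds (ENNReal.ofReal_pos.2 hε))).and
      self_mem_nhdsWithin).exists
  obtain ⟨φ, hφ_out, hφ_in, hφ⟩ := exists_bounded_zero_one_of_closed
    isOpen_thickening.isClosed_compl isClosed_cthickening
    (disjoint_compl_left_iff_subset.2 (cthickening_subset_thickening' hδ (half_lt_self hδ) F))
  refine ⟨fun k => φ (z k), fun k => (hφ _).1, ?_, ∫ y, φ y ∂ρ, ?_, hz φ⟩
  · filter_upwards [hS (δ / 2) (half_pos hδ)] with k hk hkS
    exact (hφ_in (thickening_subset_cthickening _ _ (hk hkS))).ge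
  · have hle : ∀ y, φ y ≤ (thickening δ F).indicator 1 y := fun y => by
      by_cases hy : y ∈ thickening δ F
      · simpa [hy] using (hφ y).2
      · simp [hy, hφ_out hy]
    calc ∫ y, φ y ∂ρ ≤ ∫ y, (thickening δ F).indicator 1 y ∂ρ :=
          integral_mono (φ.integrable ρ)
            ((integrable_const 1).indicator isOpen_thickening.measurableSet) hle
      _ = ρ.real (thickening δ F) := integral_indicator_one isOpen_thickening.measurableSet
      _ < ε := ENNReal.toReal_lt_of_lt_ofReal hρδ

theorem density_zero_of_bad_cells_affine_general
    (m n : ℕ) (hn : 1 < n) (hnm : n < m)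
    (a b c d : ℝ) (ha : a ≠ 0)
    (f g : ℝ → ℝ) (hf : f = fun x => a * x + b) (hg : g = fun x => c * x + d)
    (A : ℕ → Set ℝ)
    (hA : ∀ k, A k = {x : ℝ | ¬ f ⁻¹' Dcell (m ^ k) (f x) ⊆ g ⁻¹' Dcell (n ^ k) (g x)})
    (μ : Measure ℝ)
    (ρ : Measure ℝ) [IsProbabilityMeasure ρ] (hρcont : ∀ y : ℝ, ρ {y} = 0)
    (hgen : PointwiseGeneric (μ.map g) (Tmap n) ρ) :
    ∀ᵐ x ∂μ, HasDensityZero {k : ℕ | x ∈ A k} := by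
  subst hf hg
  have hρ01 : ρ {0, 1} = 0 := by
    have : NullSingletonClass ρ := ⟨hρcont⟩
    exact (toFinite _).measure_zero ρ
  have hm : (0 : ℝ) < m := by exact_mod_cast (by omega : 0 < m)
  have hratio : Tendsto (fun k : ℕ => |c| / |a| * ((n : ℝ) / m) ^ k) atTop (𝓝 0) := by
    simpa using (tendsto_pow_atTop_nhds_zero_of_lt_one (by positivity)
      ((div_lt_one hm).2 (by exact_mod_cast hnm))).const_mul (|c| / |a|)
  filter_upwards [ae_of_ae_map (by fun_prop) hgen] with x hx
  refine hasDensityZero_of_tendsto_cesaro_of_eventually_mem_thickening hx (toFinite _).isClosed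
    hρ01 fun δ hδ => ?_
  filter_upwards [eventually_ne_atTop 0, hratio.eventually (gt_mem_nhds hδ)] with k hk0 hkδ hkA
  rw [hA] at hkA
  obtain ⟨t, ht, hdist⟩ := exists_dist_fract_le_of_not_preimage_Dcell_subset
    (pow_pos (by omega) k) (pow_pos (by omega) k) ha b c d x hkA
  rw [Tmap_iterate n hk0]
  push_cast at hdist
  exact mem_thickening_iff.2 ⟨t, ht, by rw [div_pow] at hkδ; linarith⟩

/-- Claim 6.3 of the paper.  Let `m > n > 1`, let `f, g` be
non-singular affine maps of `ℝ`, and for `k ∈ ℕ` let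
`A_k = {x : f⁻¹(D_{m^k}(f x)) ⊄ g⁻¹(D_{n^k}(g x))}`.  If `μ` is a probability measure on
`[0,1]` such that `gμ` is pointwise generic under `T_n` for a continuous measure `ρ`,
then for `μ`-a.e. `x` the set of `k` with `x ∈ A_k` has density zero. -/
theorem density_zero_of_bad_cells_affine
    (m n : ℕ) (hn : 1 < n) (hnm : n < m)
    (a b c d : ℝ) (ha : a ≠ 0) (hc : c ≠ 0)
    (f g : ℝ → ℝ) (hf : f = fun x => a * x + b) (hg : g = fun x => c * x + d)
    (A : ℕ → Set ℝ)
    (hA : ∀ k, A k = {x : ℝ | ¬ f ⁻¹' Dcell (m ^ k) (f x) ⊆ g ⁻¹' Dcell (n ^ k) (g x)})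
    (μ : Measure ℝ) [IsProbabilityMeasure μ] (hμsupp : μ (Set.Icc (0:ℝ) 1)ᶜ = 0)
    (ρ : Measure ℝ) [IsProbabilityMeasure ρ] (hρcont : ∀ y : ℝ, ρ {y} = 0)
    (hgen : PointwiseGeneric (μ.map g) (Tmap n) ρ) :
    ∀ᵐ x ∂μ, HasDensityZero {k : ℕ | x ∈ A k} :=
  density_zero_of_bad_cells_affine_general m n hn hnm a b c d ha f g hf hg A hA μ ρ hρcont hgen
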